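/- arXiv:2207.14152 — 2 statements merged into one kernel-verified Lean document; each statement's English description precedes it below -/
import Mathlib

section
/- Let a < b be real numbers, t > 0, and let μ be the Borel measure on ℝ with density t·1_{[a,b]} (i.e., constant density t on the closed interval [a, b] and 0 elsewhere). Then for every positive integer n, the set { a + (2j − 1)(b − a)/(2n) : 1 ≤ j ≤ n } is an optimal set of n-means for μ, and the n-th quantization error of μ is V_n(μ) = (b − a)³ t / (12 n²). -/
open MeasureTheory Set

/-- Distortion error of a set `α` with respect to the measure `Q`. -/
noncomputable def distortion (Q : Measure ℝ) (α : Set ℝ) : ℝ :=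
  ∫ x, sInf ((fun a => (x - a) ^ 2) '' α) ∂Q

/-- The `n`-th quantization error of the measure `Q`. -/
noncomputable def quantErr (Q : Measure ℝ) (n : ℕ) : ℝ :=
  sInf { v : ℝ | ∃ α : Set ℝ, α.Finite ∧ α.Nonempty ∧ α.ncard ≤ n ∧ v = distortion Q α }

/-- `α` is an optimal set of `n`-means for `Q`. -/
def IsOptimal (Q : Measure ℝ) (n : ℕ) (α : Set ℝ) : Prop :=
  α.Finite ∧ 1 ≤ α.ncard ∧ α.ncard ≤ n ∧ distortion Q α = quantErr Q n

/-- The measure on `ℝ` with constant density `t` on `[a, b]` and `0` elsewhere. -/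
noncomputable def unif (a b t : ℝ) : Measure ℝ :=
  volume.withDensity fun x => ENNReal.ofReal ((Icc a b).indicator (fun _ => t) x)


/-!
Write the distortion of a compact set `α` as `∫ infDist x α ^ 2`. Lower bound: if `α` has `k`
points, `{x | infDist x α < r}` is covered by `k` intervals of length `2r`, so the tail
`{x ∈ [a, b] | r ≤ infDist x α}` has length at least `b - a - 2kr`. Feeding this into the
layer-cake formula `∫ d² = ∫₀^∞ 2r · |{r ≤ d}| dr`, cut off at `r = (b - a)/(2k)` where the bound
vanishes, gives `∫ₐᵇ infDist x α ^ 2 ≥ (b - a)³/(12k²)`. Upper bound: cut `[a, b]` into `n` cells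
of width `h = (b - a)/n`; the proposed points are their midpoints, and the squared distance to the
midpoint integrates to `h³/12` over a cell.
-/

open Metric Finset

theorem unif_eq_smul_restrict (a b t : ℝ) :
    unif a b t = ENNReal.ofReal t • volume.restrict (Icc a b) := by
  have : (fun x => ENNReal.ofReal ((Icc a b).indicator (fun _ => t) x))
      = (Icc a b).indicator (fun _ => ENNReal.ofReal t) := by
    ext x
    by_cases hx : x ∈ Icc a b <;> simp [hx]
  rw [unif, this, withDensity_indicator measurableSet_Icc, withDensity_const]

theorem infDist_sq_le_sq_sub_of_mem {α : Set ℝ} {c : ℝ} (hc : c ∈ α) (x : ℝ) :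
    infDist x α ^ 2 ≤ (x - c) ^ 2 := by
  rw [← sq_abs (x - c), ← Real.dist_eq]
  exact pow_le_pow_left₀ infDist_nonneg (infDist_le_dist_of_mem hc) 2

theorem sInf_image_sq_sub_eq_infDist_sq {α : Set ℝ} (hα : IsCompact α) (hne : α.Nonempty)
    (x : ℝ) : sInf ((fun a => (x - a) ^ 2) '' α) = infDist x α ^ 2 := by
  refine IsLeast.csInf_eq ⟨?_, ?_⟩
  · obtain ⟨c, hc, hdist⟩ := hα.exists_infDist_eq_dist hne x
    exact ⟨c, hc, by rw [hdist, Real.dist_eq, sq_abs]⟩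
  · rintro _ ⟨c, hc, rfl⟩
    exact infDist_sq_le_sq_sub_of_mem hc x

theorem distortion_eq_integral_infDist_sq (Q : Measure ℝ) {α : Set ℝ} (hα : IsCompact α)
    (hne : α.Nonempty) : distortion Q α = ∫ x, infDist x α ^ 2 ∂Q := by
  simp only [distortion, sInf_image_sq_sub_eq_infDist_sq hα hne]

theorem distortion_unif {a b t : ℝ} (hab : a ≤ b) (ht : 0 ≤ t) {α : Set ℝ} (hα : IsCompact α)
    (hne : α.Nonempty) : distortion (unif a b t) α = t * ∫ x in a..b, infDist x α ^ 2 := by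
  rw [distortion_eq_integral_infDist_sq _ hα hne, unif_eq_smul_restrict, integral_smul_measure,
    ENNReal.toReal_ofReal ht, smul_eq_mul, integral_Icc_eq_integral_Ioc,
    intervalIntegral.integral_of_le hab]

theorem volume_setOf_infDist_lt_le {s : Finset ℝ} (hs : s.Nonempty) (r : ℝ) :
    volume {x | infDist x (s : Set ℝ) < r} ≤ ENNReal.ofReal (2 * r * #s) := by
  have hsub : {x | infDist x (s : Set ℝ) < r} ⊆ ⋃ c ∈ s, ball c r := by
    intro x hx
    obtain ⟨c, hc, hxc⟩ := (infDist_lt_iff (s.coe_nonempty.2 hs)).1 hx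
    exact mem_biUnion hc hxc
  calc volume {x | infDist x (s : Set ℝ) < r} ≤ ∑ c ∈ s, volume (ball c r) :=
        (measure_mono hsub).trans (measure_biUnion_finset_le _ _)
    _ = ENNReal.ofReal (2 * r * #s) := by
        rcases le_or_gt r 0 with hr | hr
        · simp [ball_eq_empty.2 hr, ENNReal.ofReal_of_nonpos (by nlinarith : 2 * r * #s ≤ 0)]
        · rw [ENNReal.ofReal_mul (by positivity)]
          simp [Real.volume_ball, mul_comm]

theorem ofReal_le_restrict_setOf_le_infDist {a b r : ℝ} (hr : 0 ≤ r)
    {s : Finset ℝ} (hs : s.Nonempty) :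
    ENNReal.ofReal (b - a - 2 * r * #s) ≤
      volume.restrict (Ioc a b) {x | r ≤ infDist x (s : Set ℝ)} := by
  have hcompl : {x | r ≤ infDist x (s : Set ℝ)} = {x | infDist x (s : Set ℝ) < r}ᶜ := by
    ext x; simp
  have hmeas : MeasurableSet {x | infDist x (s : Set ℝ) < r} :=
    measurableSet_lt (continuous_infDist_pt _).measurable measurable_const
  rw [hcompl, measure_compl hmeas (measure_ne_top _ _), Measure.restrict_apply_univ,
    Real.volume_Ioc, ENNReal.ofReal_sub _ (by positivity)]
  gcongr
  exact (Measure.restrict_le_self _).trans (volume_setOf_infDist_lt_le hs r)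

theorem lintegral_ofReal_infDist_sq_eq (μ : Measure ℝ) (α : Set ℝ) :
    ∫⁻ x, ENNReal.ofReal (infDist x α ^ 2) ∂μ =
      ∫⁻ r in Ioi 0, μ {x | r ≤ infDist x α} * ENNReal.ofReal (2 * r) := by
  have := lintegral_comp_eq_lintegral_meas_le_mul μ (f := (infDist · α)) (g := fun r => 2 * r)
    (.of_forall fun _ => infDist_nonneg) (continuous_infDist_pt α).aemeasurable
    (fun _ _ => (continuous_const.mul continuous_id).intervalIntegrable _ _)
    ((ae_restrict_iff' measurableSet_Ioi).2 (.of_forall fun r (hr : 0 < r) => by positivity))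
  rw [← this]
  congr 1 with x
  rw [intervalIntegral.integral_const_mul, integral_id]
  ring_nf

theorem integral_sub_mul_two_mul {L k : ℝ} (hk : 0 < k) :
    ∫ r in (0 : ℝ)..L / (2 * k), (L - 2 * r * k) * (2 * r) = L ^ 3 / (12 * k ^ 2) := by
  have hpoly : (fun r => (L - 2 * r * k) * (2 * r)) = fun r => 2 * L * r - 4 * k * r ^ 2 := by
    ext r; ring
  rw [hpoly, intervalIntegral.integral_sub ((by fun_prop : Continuous _).intervalIntegrable _ _)
      ((by fun_prop : Continuous _).intervalIntegrable _ _),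
    intervalIntegral.integral_const_mul, intervalIntegral.integral_const_mul, integral_id,
    integral_pow, div_pow, div_pow]
  field_simp
  ring

theorem le_integral_infDist_sq {a b : ℝ} (hab : a ≤ b) {s : Finset ℝ} (hs : s.Nonempty) :
    (b - a) ^ 3 / (12 * (#s : ℝ) ^ 2) ≤ ∫ x in a..b, infDist x (s : Set ℝ) ^ 2 := by
  set μ := volume.restrict (Ioc a b)
  set k : ℝ := (#s : ℝ)
  have hk : 0 < k := by simp [k, hs.card_pos]
  set R := (b - a) / (2 * k)
  have hR : 0 ≤ R := by positivity
  have hcont : Continuous fun r : ℝ => (b - a - 2 * r * k) * (2 * r) := by fun_prop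
  have hnonneg : ∀ r ∈ Ioc 0 R, 0 ≤ (b - a - 2 * r * k) * (2 * r) := by
    rintro r ⟨hr0, hrR⟩
    have : 2 * r * k ≤ b - a := by
      rw [le_div_iff₀ (by positivity)] at hrR; linarith
    nlinarith
  rw [intervalIntegral.integral_of_le hab,
    ← ENNReal.ofReal_le_ofReal_iff (integral_nonneg fun _ => sq_nonneg _),
    ofReal_integral_eq_lintegral_ofReal
      (by fun_prop : Continuous fun x => infDist x (s : Set ℝ) ^ 2).integrableOn_Ioc
      (.of_forall fun _ => sq_nonneg _),
    lintegral_ofReal_infDist_sq_eq, ← integral_sub_mul_two_mul hk,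
    intervalIntegral.integral_of_le hR, ofReal_integral_eq_lintegral_ofReal hcont.integrableOn_Ioc
      ((ae_restrict_iff' measurableSet_Ioc).2 (.of_forall hnonneg))]
  calc ∫⁻ r in Ioc 0 R, ENNReal.ofReal ((b - a - 2 * r * k) * (2 * r))
      ≤ ∫⁻ r in Ioc 0 R, μ {x | r ≤ infDist x (s : Set ℝ)} * ENNReal.ofReal (2 * r) := by
        refine setLIntegral_mono' measurableSet_Ioc fun r hr => ?_
        rw [ENNReal.ofReal_mul' (by linarith [hr.1])]
        exact mul_le_mul_left (ofReal_le_restrict_setOf_le_infDist hr.1.le hs) _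
    _ ≤ ∫⁻ r in Ioi 0, μ {x | r ≤ infDist x (s : Set ℝ)} * ENNReal.ofReal (2 * r) :=
        lintegral_mono_set Ioc_subset_Ioi_self

theorem integral_sq_sub_midpoint (u v : ℝ) :
    ∫ x in u..v, (x - (u + v) / 2) ^ 2 = (v - u) ^ 3 / 12 := by
  rw [intervalIntegral.integral_comp_sub_right (· ^ 2), integral_pow]
  ring

theorem integral_infDist_sq_le_of_midpoint_mem {u v : ℝ} (huv : u ≤ v) {α : Set ℝ}
    (hmid : (u + v) / 2 ∈ α) : ∫ x in u..v, infDist x α ^ 2 ≤ (v - u) ^ 3 / 12 := by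
  rw [← integral_sq_sub_midpoint]
  refine intervalIntegral.integral_mono huv ((by fun_prop : Continuous _).intervalIntegrable _ _)
    ((by fun_prop : Continuous _).intervalIntegrable _ _) fun x => ?_
  exact infDist_sq_le_sq_sub_of_mem hmid x

theorem integral_infDist_sq_le_of_centers_mem {a b : ℝ} (hab : a ≤ b) {n : ℕ} (hn : 0 < n)
    {α : Set ℝ} (hα : ∀ i < n, a + (2 * i + 1) * (b - a) / (2 * n) ∈ α) :
    ∫ x in a..b, infDist x α ^ 2 ≤ (b - a) ^ 3 / (12 * n ^ 2) := by
  set x : ℕ → ℝ := fun i => a + i * (b - a) / n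
  have hx0 : x 0 = a := by simp [x]
  have hxn : x n = b := by simp only [x]; field_simp; ring
  have hcell : ∀ i < n, ∫ y in x i..x (i + 1), infDist y α ^ 2 ≤ ((b - a) / n) ^ 3 / 12 := by
    intro i hi
    have hwidth : x (i + 1) - x i = (b - a) / n := by simp only [x]; push_cast; ring
    rw [← hwidth]
    refine integral_infDist_sq_le_of_midpoint_mem (by rw [← sub_nonneg, hwidth]; positivity) ?_
    convert hα i hi using 1
    simp only [x]; push_cast; field_simp; ring
  have hsplit : ∑ i ∈ range n, ∫ y in x i..x (i + 1), infDist y α ^ 2 =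
      ∫ y in a..b, infDist y α ^ 2 := by
    rw [intervalIntegral.sum_integral_adjacent_intervals fun i _ =>
      (by fun_prop : Continuous fun y => infDist y α ^ 2).intervalIntegrable _ _, hx0, hxn]
  rw [← hsplit]
  calc ∑ i ∈ range n, ∫ y in x i..x (i + 1), infDist y α ^ 2
      ≤ ∑ i ∈ range n, ((b - a) / n) ^ 3 / 12 := sum_le_sum fun i hi => hcell i (mem_range.1 hi)
    _ = (b - a) ^ 3 / (12 * n ^ 2) := by
        rw [sum_const, card_range, nsmul_eq_mul, div_pow]
        field_simp

theorem le_distortion_unif {a b t : ℝ} (hab : a ≤ b) (ht : 0 ≤ t) {n : ℕ} {β : Set ℝ}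
    (hβ : β.Finite) (hne : β.Nonempty) (hcard : β.ncard ≤ n) :
    (b - a) ^ 3 * t / (12 * n ^ 2) ≤ distortion (unif a b t) β := by
  lift β to Finset ℝ using hβ
  rw [ncard_coe_finset] at hcard
  have hs := coe_nonempty.1 hne
  rw [distortion_unif hab ht β.finite_toSet.isCompact hne]
  calc (b - a) ^ 3 * t / (12 * n ^ 2) ≤ t * ((b - a) ^ 3 / (12 * (#β : ℝ) ^ 2)) := by
        rw [mul_comm _ t, mul_div_assoc]
        gcongr
    _ ≤ t * ∫ x in a..b, infDist x (β : Set ℝ) ^ 2 := by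
        gcongr
        exact le_integral_infDist_sq hab hs

theorem distortion_unif_le_of_centers_mem {a b t : ℝ} (hab : a ≤ b) (ht : 0 ≤ t) {n : ℕ}
    (hn : 0 < n) {α : Set ℝ} (hα : IsCompact α) (hne : α.Nonempty)
    (hcenters : ∀ i < n, a + (2 * i + 1) * (b - a) / (2 * n) ∈ α) :
    distortion (unif a b t) α ≤ (b - a) ^ 3 * t / (12 * n ^ 2) := by
  rw [distortion_unif hab ht hα hne, mul_comm ((b - a) ^ 3), mul_div_assoc]
  gcongr
  exact integral_infDist_sq_le_of_centers_mem hab hn hcenters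

theorem quantErr_eq_distortion_of_forall_le {Q : Measure ℝ} {n : ℕ} {α : Set ℝ}
    (hα : α.Finite) (hne : α.Nonempty) (hcard : α.ncard ≤ n)
    (hmin : ∀ β : Set ℝ, β.Finite → β.Nonempty → β.ncard ≤ n → distortion Q α ≤ distortion Q β) :
    quantErr Q n = distortion Q α :=
  IsLeast.csInf_eq ⟨⟨α, hα, hne, hcard, rfl⟩, by
    rintro _ ⟨β, hβ, hβne, hβcard, rfl⟩
    exact hmin β hβ hβne hβcard⟩

theorem stmt_2 (a b t : ℝ) (hab : a < b) (ht : 0 < t) (n : ℕ) (hn : 0 < n) :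
    IsOptimal (unif a b t) n
      {x : ℝ | ∃ j : ℕ, 1 ≤ j ∧ j ≤ n ∧ x = a + (2 * (j : ℝ) - 1) * (b - a) / (2 * n)} ∧
    quantErr (unif a b t) n = (b - a) ^ 3 * t / (12 * n ^ 2) := by
  set g : ℕ → ℝ := fun j => a + (2 * (j : ℝ) - 1) * (b - a) / (2 * n)
  have hg : StrictMono g := fun i j hij => by
    have : (i : ℝ) < j := Nat.cast_lt.2 hij
    simp only [g]
    gcongr
  set S : Finset ℝ := (Finset.Icc 1 n).image g
  have hS : {x : ℝ | ∃ j : ℕ, 1 ≤ j ∧ j ≤ n ∧ x = g j} = S := by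
    ext x; simp [S, and_assoc, eq_comm]
  have hcard : (S : Set ℝ).ncard = n := by
    rw [ncard_coe_finset, Finset.card_image_of_injective _ hg.injective, Nat.card_Icc,
      Nat.add_sub_cancel]
  have hne : (S : Set ℝ).Nonempty := by
    rw [← ncard_pos S.finite_toSet, hcard]; exact hn
  have hupper : distortion (unif a b t) S ≤ (b - a) ^ 3 * t / (12 * n ^ 2) := by
    refine distortion_unif_le_of_centers_mem hab.le ht.le hn S.finite_toSet.isCompact hne
      fun i hi => mem_image.2 ⟨i + 1, mem_Icc.2 ⟨by omega, hi⟩, ?_⟩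
    simp only [g]; push_cast; ring
  have hquant := quantErr_eq_distortion_of_forall_le S.finite_toSet hne hcard.le
    fun β hβ hβne hβcard => hupper.trans (le_distortion_unif hab.le ht.le hβ hβne hβcard)
  rw [hS]
  exact ⟨⟨S.finite_toSet, hcard ▸ hn, hcard.le, hquant.symm⟩, hquant.trans
    (hupper.antisymm (le_distortion_unif hab.le ht.le S.finite_toSet hne hcard.le))⟩
end

section
/- Let P be the Borel probability measure on ℝ with density f given by f(x) = 1/2 for x ∈ [0, 1/2] ∪ [1, 3/2], f(x) = 1 for x ∈ (1/2, 1), and f(x) = 0 otherwise. Then the set {7/16, 17/16} is an optimal set of two-means for P, and the second quantization error is V₂(P) = 37/768. -/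
open MeasureTheory Set

/-- The density of the mixed distribution `P = (1/2) P₁ + (1/2) P₂`. -/
noncomputable def f2 (x : ℝ) : ℝ :=
  if x ∈ Icc (0 : ℝ) (1 / 2) ∪ Icc (1 : ℝ) (3 / 2) then 1 / 2
  else if x ∈ Ioo (1 / 2 : ℝ) 1 then 1
  else 0

/-- The mixed distribution `P = (1/2) P₁ + (1/2) P₂`. -/
noncomputable def P2 : Measure ℝ :=
  volume.withDensity fun x => ENNReal.ofReal (f2 x)

/-! ### Auxiliary lemmas -/

noncomputable def gm (a b : ℝ) : ℝ → ℝ := fun x => min ((x - a) ^ 2) ((x - b) ^ 2)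

lemma gm_cont (a b : ℝ) : Continuous (gm a b) := by
  unfold gm; fun_prop

lemma gm_intble (a b u v : ℝ) : IntervalIntegrable (gm a b) volume u v :=
  (gm_cont a b).intervalIntegrable u v

lemma f2_nonneg (x : ℝ) : 0 ≤ f2 x := by
  unfold f2; split_ifs <;> norm_num

lemma f2_meas0 : Measurable f2 := by
  unfold f2
  apply Measurable.ite (measurableSet_Icc.union measurableSet_Icc) measurable_const
  exact Measurable.ite measurableSet_Ioo measurable_const measurable_const

lemma f2_meas : Measurable fun x => (f2 x).toNNReal :=
  measurable_real_toNNReal.comp f2_meas0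

lemma f2_eq (x : ℝ) : f2 x =
    (if x ∈ Icc (0:ℝ) (3/2) then (1:ℝ)/2 else 0) +
    (if x ∈ Ioo (1/2:ℝ) 1 then (1:ℝ)/2 else 0) := by
  by_cases hA : x ∈ Icc (0:ℝ) (1/2) ∪ Icc 1 (3/2)
  · have h2 : f2 x = 1/2 := if_pos hA
    rcases hA with hA | hA
    · have d1 : x ∈ Icc (0:ℝ) (3/2) := ⟨hA.1, by linarith [hA.2]⟩
      have d2 : x ∉ Ioo (1/2:ℝ) 1 := fun h => absurd hA.2 (not_le.2 h.1)
      rw [h2, if_pos d1, if_neg d2]; ring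
    · have d1 : x ∈ Icc (0:ℝ) (3/2) := ⟨by linarith [hA.1], hA.2⟩
      have d2 : x ∉ Ioo (1/2:ℝ) 1 := fun h => absurd hA.1 (not_le.2 h.2)
      rw [h2, if_pos d1, if_neg d2]; ring
  · by_cases hB : x ∈ Ioo (1/2:ℝ) 1
    · have h2 : f2 x = 1 := by rw [f2, if_neg hA, if_pos hB]
      have d1 : x ∈ Icc (0:ℝ) (3/2) := ⟨by linarith [hB.1], by linarith [hB.2]⟩
      rw [h2, if_pos d1, if_pos hB]; ring
    · have h2 : f2 x = 0 := by rw [f2, if_neg hA, if_neg hB]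
      have d1 : x ∉ Icc (0:ℝ) (3/2) := by
        intro h
        rcases le_or_gt x (1/2) with hx | hx
        · exact hA (Or.inl ⟨h.1, hx⟩)
        rcases lt_or_ge x 1 with hy | hy
        · exact hB ⟨hx, hy⟩
        · exact hA (Or.inr ⟨hy, h.2⟩)
      rw [h2, if_neg d1, if_neg hB]; ring

lemma integral_P2 (φ : ℝ → ℝ) (hφ : Continuous φ) :
    ∫ x, φ x ∂P2 = (1/2) * ((∫ x in (0:ℝ)..(3/2), φ x) + ∫ x in (1/2:ℝ)..1, φ x) := by
  rw [P2]
  simp only [ENNReal.ofReal]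
  rw [integral_withDensity_eq_integral_smul f2_meas]
  have hpt : ∀ x, (f2 x).toNNReal • φ x =
      Set.indicator (Icc (0:ℝ) (3/2)) (fun x => (1/2) * φ x) x +
      Set.indicator (Ioo (1/2:ℝ) 1) (fun x => (1/2) * φ x) x := by
    intro x
    rw [NNReal.smul_def, Real.coe_toNNReal _ (f2_nonneg x), f2_eq]
    simp only [Set.indicator_apply]
    split_ifs <;> simp only [smul_eq_mul] <;> ring
  rw [integral_congr_ae (Filter.Eventually.of_forall hpt)]
  have hi1 : Integrable (Set.indicator (Icc (0:ℝ) (3/2)) (fun x => (1/2) * φ x)) := by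
    rw [integrable_indicator_iff measurableSet_Icc]
    exact (continuous_const.mul hφ).integrableOn_Icc
  have hi2 : Integrable (Set.indicator (Ioo (1/2:ℝ) 1) (fun x => (1/2) * φ x)) := by
    rw [integrable_indicator_iff measurableSet_Ioo]
    exact ((continuous_const.mul hφ).integrableOn_Icc).mono_set Ioo_subset_Icc_self
  rw [integral_add hi1 hi2, integral_indicator measurableSet_Icc,
    integral_indicator measurableSet_Ioo,
    integral_Icc_eq_integral_Ioc, show (∫ x in Ioo (1/2:ℝ) 1, (1/2) * φ x) = ∫ x in Ioc (1/2:ℝ) 1, (1/2) * φ x from (integral_Ioc_eq_integral_Ioo).symm,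
    ← intervalIntegral.integral_of_le (by norm_num : (0:ℝ) ≤ 3/2),
    ← intervalIntegral.integral_of_le (by norm_num : (1/2:ℝ) ≤ 1),
    intervalIntegral.integral_const_mul, intervalIntegral.integral_const_mul]
  ring

lemma Ival (c u v : ℝ) : ∫ x in u..v, (x - c)^2 = ((v-c)^3 - (u-c)^3)/3 := by
  have h := intervalIntegral.integral_comp_sub_right (a := u) (b := v) (fun x => x ^ 2) c
  rw [h, integral_pow]
  norm_num

lemma gm_left {a b x : ℝ} (hab : a ≤ b) (hx : x ≤ (a+b)/2) : gm a b x = (x - a)^2 := by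
  apply min_eq_left; nlinarith [mul_nonneg (sub_nonneg.2 hab) (by linarith : (0:ℝ) ≤ a + b - 2*x)]

lemma gm_right {a b x : ℝ} (hab : a ≤ b) (hx : (a+b)/2 ≤ x) : gm a b x = (x - b)^2 := by
  apply min_eq_right; nlinarith [mul_nonneg (sub_nonneg.2 hab) (by linarith : (0:ℝ) ≤ 2*x - a - b)]

lemma int_left {a b u v : ℝ} (hab : a ≤ b) (hu : u ≤ (a+b)/2) (hv : v ≤ (a+b)/2) :
    ∫ x in u..v, gm a b x = ((v-a)^3 - (u-a)^3)/3 := by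
  rw [show ∫ x in u..v, gm a b x = ∫ x in u..v, (x - a)^2 from
    intervalIntegral.integral_congr fun x hx => by
      rcases Set.mem_uIcc.mp hx with ⟨_, h2⟩ | ⟨_, h2⟩ <;> exact gm_left hab (by linarith)]
  exact Ival a u v

lemma int_right {a b u v : ℝ} (hab : a ≤ b) (hu : (a+b)/2 ≤ u) (hv : (a+b)/2 ≤ v) :
    ∫ x in u..v, gm a b x = ((v-b)^3 - (u-b)^3)/3 := by
  rw [show ∫ x in u..v, gm a b x = ∫ x in u..v, (x - b)^2 from
    intervalIntegral.integral_congr fun x hx => by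
      rcases Set.mem_uIcc.mp hx with ⟨h1, _⟩ | ⟨h1, _⟩ <;> exact gm_right hab (by linarith)]
  exact Ival b u v

lemma int_split {a b u v : ℝ} (hab : a ≤ b) (hu : u ≤ (a+b)/2) (hv : (a+b)/2 ≤ v) :
    ∫ x in u..v, gm a b x =
      (((a+b)/2-a)^3 - (u-a)^3)/3 + ((v-b)^3 - ((a+b)/2-b)^3)/3 := by
  rw [← intervalIntegral.integral_add_adjacent_intervals (b := (a+b)/2)
      (gm_intble a b u _) (gm_intble a b _ v),
    int_left hab hu le_rfl, int_right hab le_rfl hv]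

lemma key (a b : ℝ) (hab : a ≤ b) :
    37/768 ≤ (1/2) * ((∫ x in (0:ℝ)..(3/2), gm a b x) + ∫ x in (1/2:ℝ)..1, gm a b x) := by
  rcases le_or_gt ((a+b)/2) 0 with h0 | h0
  · rw [int_right hab (by linarith) (by linarith), int_right hab (by linarith) (by linarith)]
    nlinarith [sq_nonneg (b - 3/4)]
  rcases le_or_gt ((a+b)/2) (1/2) with h1 | h1
  · rw [int_split hab (by linarith) (by linarith), int_right hab h1 (by linarith)]
    nlinarith [mul_nonneg (mul_nonneg (sub_nonneg.2 hab) (by linarith : (0:ℝ) ≤ a + b))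
        (by linarith : (0:ℝ) ≤ 1 - (a+b)),
      sq_nonneg a, sq_nonneg (b - 6/7)]
  rcases le_or_gt ((a+b)/2) 1 with h2 | h2
  · rw [int_split hab (by linarith) (by linarith), int_split hab (by linarith) (by linarith)]
    nlinarith [sq_nonneg ((b-a) - (a+b-3/2)^2/2 - 5/8),
      mul_nonneg (sq_nonneg (a+b-3/2))
        (by nlinarith [mul_nonneg (by linarith : (0:ℝ) ≤ 2 - (a+b)) (by linarith : (0:ℝ) ≤ (a+b) - 1)] :
          (0:ℝ) ≤ 3 - 2*(a+b-3/2)^2)]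
  rcases le_or_gt ((a+b)/2) (3/2) with h3 | h3
  · rw [int_split hab (by linarith) (by linarith), int_left hab (by linarith) (by linarith)]
    nlinarith [sq_nonneg ((b-a) - ((a+b-1)^2 + 2)/4),
      mul_nonneg (sq_nonneg (a+b-2))
        (by nlinarith [mul_nonneg (by linarith : (0:ℝ) ≤ 3 - (a+b)) (by linarith : (0:ℝ) ≤ (a+b) - 1)] :
          (0:ℝ) ≤ 1 - (a+b-2)^2),
      mul_nonneg (sq_nonneg (a+b-2)) (by linarith : (0:ℝ) ≤ 3 - (a+b)),
      sq_nonneg (a+b-2), (by linarith : (0:ℝ) ≤ (a+b) - 2)]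
  · rw [int_left hab (by linarith) (by linarith), int_left hab (by linarith) (by linarith)]
    nlinarith [sq_nonneg (a - 3/4)]

lemma sInf_pair_eq (a b x : ℝ) : sInf ((fun p => (x - p) ^ 2) '' ({a, b} : Set ℝ)) = gm a b x := by
  rw [Set.image_pair, csInf_pair]
  rfl

lemma distortion_pair (a b : ℝ) : distortion P2 {a, b} =
    (1/2) * ((∫ x in (0:ℝ)..(3/2), gm a b x) + ∫ x in (1/2:ℝ)..1, gm a b x) := by
  unfold distortion
  rw [show (fun x => sInf ((fun p => (x - p) ^ 2) '' ({a, b} : Set ℝ))) = gm a b from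
    funext fun x => sInf_pair_eq a b x]
  exact integral_P2 _ (gm_cont a b)

lemma distortion_single (a : ℝ) : distortion P2 {a} = a^2 - 3*a/2 + 17/24 := by
  unfold distortion
  rw [show (fun x => sInf ((fun p => (x - p) ^ 2) '' ({a} : Set ℝ))) = fun x => (x - a)^2 from
    funext fun x => by rw [Set.image_singleton, csInf_singleton]]
  rw [integral_P2 _ (by fun_prop), Ival, Ival]
  ring

lemma distortion_val : distortion P2 {7/16, 17/16} = 37/768 := by
  rw [distortion_pair]
  rw [int_split (by norm_num : (7:ℝ)/16 ≤ 17/16) (by norm_num) (by norm_num),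
    int_split (by norm_num : (7:ℝ)/16 ≤ 17/16) (by norm_num) (by norm_num)]
  norm_num

lemma lower_bound : ∀ v ∈ { v : ℝ | ∃ α : Set ℝ, α.Finite ∧ α.Nonempty ∧ α.ncard ≤ 2 ∧
    v = distortion P2 α }, 37/768 ≤ v := by
  rintro v ⟨α, hfin, hne, hcard, rfl⟩
  have hpos : 0 < α.ncard := (Set.ncard_pos hfin).mpr hne
  interval_cases h : α.ncard
  · obtain ⟨a, rfl⟩ := Set.ncard_eq_one.mp h
    rw [distortion_single]
    nlinarith [sq_nonneg (a - 3/4)]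
  · obtain ⟨a, b, hne', rfl⟩ := Set.ncard_eq_two.mp h
    rcases le_total a b with hab | hab
    · rw [distortion_pair]; exact key a b hab
    · rw [Set.pair_comm, distortion_pair]; exact key b a hab

lemma quantErr_val : quantErr P2 2 = 37/768 := by
  unfold quantErr
  apply le_antisymm
  · apply csInf_le ⟨37/768, lower_bound⟩
    exact ⟨{7/16, 17/16}, (Set.finite_singleton _).insert _, ⟨7/16, by simp⟩,
      le_of_eq (Set.ncard_pair (by norm_num)), distortion_val.symm⟩
  · exact le_csInf ⟨distortion P2 {7/16, 17/16}, {7/16, 17/16},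
      (Set.finite_singleton _).insert _, ⟨7/16, by simp⟩,
      le_of_eq (Set.ncard_pair (by norm_num)), rfl⟩ lower_bound

theorem stmt_5 :
    IsOptimal P2 2 {7 / 16, 17 / 16} ∧ quantErr P2 2 = 37 / 768 := by
  have hcard : ({7 / 16, 17 / 16} : Set ℝ).ncard = 2 := Set.ncard_pair (by norm_num)
  refine ⟨⟨(Set.finite_singleton _).insert _, hcard ▸ one_le_two, le_of_eq hcard,
    by rw [distortion_val, quantErr_val]⟩, quantErr_val⟩
end
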